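/- Let α, β > 0, s₀ ∈ (0, 1/2], T = (1−s₀)/α, and let g : ℝ → ℝ be continuously differentiable and satisfy 2αβ < g(x) < α² + αβ for all x ∈ ℝ. If s is the solution on [0,T] of the free-boundary ODE with s(0) = s₀, then s is twice continuously differentiable on [0,T] and its second derivative satisfies s̈(t) = g′(s(t)+αt)·(ṡ(t)+α) / ( 2ṡ(t) − (α+β) ) for all t ∈ [0,T]. -/

import Mathlib

/-!
The right-hand side of the ODE is a `C¹` function of `(s, t)` as long as the radicand stays
positive, and `g > 2αβ` keeps it positive since `((α+β)/2)² - αβ = ((α-β)/2)² ≥ 0`. Bootstrapping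
`ṡ = F(s, t)` therefore gives `s ∈ C¹` and then `s ∈ C²`, and the chain rule gives `s̈`; the
denominator `2√(…)` of the derivative of the square root is `(α+β) - 2ṡ`.
-/

open Set

/-- Unlike `contDiffOn_succ_iff_derivWithin`, this needs no unique differentiability of `s`. -/
theorem contDiffOn_succ_of_hasDerivWithinAt {𝕜 F : Type*} [NontriviallyNormedField 𝕜]
    [NormedAddCommGroup F] [NormedSpace 𝕜 F] {f f' : 𝕜 → F} {s : Set 𝕜} {n : ℕ}
    (hf : ∀ x ∈ s, HasDerivWithinAt f (f' x) s x) (hf' : ContDiffOn 𝕜 n f' s) :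
    ContDiffOn 𝕜 (n + 1) f s := by
  refine (contDiffOn_succ_iff_hasFDerivWithinAt (by simp)).2 fun x hx =>
    ⟨s, by rw [insert_eq_of_mem hx]; exact self_mem_nhdsWithin, by simp,
      fun y => (1 : 𝕜 →L[𝕜] 𝕜).smulRight (f' y), hf, contDiffOn_const.smulRight hf'⟩

noncomputable def freeBoundarySpeed (α β : ℝ) (g : ℝ → ℝ) (y t : ℝ) : ℝ :=
  (α + β) / 2 - Real.sqrt (((α + β) / 2) ^ 2 + g (y + α * t) - α * β)

theorem freeBoundary_radicand_pos (α β : ℝ) {y : ℝ} (hy : 0 < y) :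
    0 < ((α + β) / 2) ^ 2 + y - α * β := by
  nlinarith [sq_nonneg (α - β)]

section

variable {α β : ℝ} {g s : ℝ → ℝ} {I : Set ℝ}

theorem ContDiffOn.freeBoundarySpeed {n : WithTop ℕ∞} (hs : ContDiffOn ℝ n s I)
    (hg : ContDiff ℝ n g) (hpos : ∀ x, 0 < ((α + β) / 2) ^ 2 + g x - α * β) :
    ContDiffOn ℝ n (fun τ => freeBoundarySpeed α β g (s τ) τ) I := by
  have hx : ContDiffOn ℝ n (fun τ => s τ + α * τ) I :=
    hs.add (contDiffOn_const.mul contDiffOn_id)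
  have hrad : ContDiffOn ℝ n (fun τ => ((α + β) / 2) ^ 2 + g (s τ + α * τ) - α * β) I :=
    (contDiffOn_const.add (hg.comp_contDiffOn hx)).sub contDiffOn_const
  unfold _root_.freeBoundarySpeed
  exact contDiffOn_const.sub (hrad.sqrt fun τ _ => (hpos _).ne')

theorem HasDerivWithinAt.freeBoundarySpeed {v g' t : ℝ} (hs : HasDerivWithinAt s v I t)
    (hg : HasDerivAt g g' (s t + α * t))
    (hpos : 0 < ((α + β) / 2) ^ 2 + g (s t + α * t) - α * β) :
    HasDerivWithinAt (fun τ => freeBoundarySpeed α β g (s τ) τ)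
      (g' * (v + α) / (2 * freeBoundarySpeed α β g (s t) t - (α + β))) I t := by
  have hx : HasDerivWithinAt (fun τ => s τ + α * τ) (v + α) I t :=
    (hs.add ((hasDerivAt_id' t).const_mul α).hasDerivWithinAt).congr_deriv (by rw [mul_one])
  have hrad := ((hg.comp_hasDerivWithinAt t hx).const_add (((α + β) / 2) ^ 2)).sub_const (α * β)
  refine (((Real.hasDerivAt_sqrt hpos.ne').comp_hasDerivWithinAt t hrad).const_sub
    ((α + β) / 2)).congr_deriv ?_
  have hsqrt : Real.sqrt (((α + β) / 2) ^ 2 + g (s t + α * t) - α * β) ≠ 0 :=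
    (Real.sqrt_pos.2 hpos).ne'
  unfold _root_.freeBoundarySpeed
  field_simp
  ring

end

theorem free_boundary_ode_second_derivative (α β T : ℝ) (g : ℝ → ℝ) (s : ℝ → ℝ)
    (hα : 0 < α) (hβ : 0 < β) (hg : ContDiff ℝ 1 g)
    (hgl : ∀ x : ℝ, 2 * α * β < g x)
    (hODE : ∀ t ∈ Set.Icc 0 T, HasDerivWithinAt s
      ((α + β) / 2 - Real.sqrt (((α + β) / 2) ^ 2 + g (s t + α * t) - α * β))
      (Set.Icc 0 T) t) :
    ContDiffOn ℝ 2 s (Set.Icc 0 T) ∧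
    ∀ t ∈ Set.Icc 0 T,
      HasDerivWithinAt
        (fun τ => (α + β) / 2 - Real.sqrt (((α + β) / 2) ^ 2 + g (s τ + α * τ) - α * β))
        (deriv g (s t + α * t) *
            (((α + β) / 2 - Real.sqrt (((α + β) / 2) ^ 2 + g (s t + α * t) - α * β)) + α) /
          (2 * ((α + β) / 2 - Real.sqrt (((α + β) / 2) ^ 2 + g (s t + α * t) - α * β))
            - (α + β)))
        (Set.Icc 0 T) t := by
  have hpos (x : ℝ) : 0 < ((α + β) / 2) ^ 2 + g x - α * β :=
    freeBoundary_radicand_pos α β ((by positivity : 0 < 2 * α * β).trans (hgl x))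
  have hbootstrap (n : ℕ) (hn : (n : WithTop ℕ∞) ≤ 1) (hs : ContDiffOn ℝ n s (Icc 0 T)) :
      ContDiffOn ℝ (n + 1) s (Icc 0 T) :=
    contDiffOn_succ_of_hasDerivWithinAt hODE (hs.freeBoundarySpeed (hg.of_le hn) hpos)
  have hs₁ : ContDiffOn ℝ 1 s (Icc 0 T) := by
    simpa using hbootstrap 0 (by simp)
      (contDiffOn_zero.2 fun t ht => (hODE t ht).continuousWithinAt)
  refine ⟨by simpa [one_add_one_eq_two] using hbootstrap 1 le_rfl hs₁, fun t ht => ?_⟩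
  exact (hODE t ht).freeBoundarySpeed (hg.differentiable one_ne_zero _).hasDerivAt (hpos _)
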